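/- Let A = A₀ ⊕ A₁ be a ℤ/2-graded commutative ring, X a set, P : X² → A₀ symmetric, G : X² → A₀, S : X² → A₀ antisymmetric, F : X² → A₁, and define Π^{(n+2)} and Π_F^{(n+2)} by the double-sum and single-sum chain formulas (Π^{(n+2)}(r;t_1,…,t_n;s) = ∑_α (−1)^α G^α(t_α,…,t_1,r) P(t_α,t_{α+1}) G^{n−α}(t_{α+1},…,s) − ∑_{α,β} (−1)^α G^α(t_α,…,r) F(t_{α+1},t_α) S^β(t_{α+1},…,t_{α+β+1}) F(t_{α+β+1},t_{α+β+2}) G^{n−1−α−β}(…,s), with t_0 = r, t_{n+1} = s; and Π_F^{(n+2)}(r;t_1,…,t_n;s) = ∑_α S^α(r,…,t_α) F(t_α,t_{α+1}) G^{n−α}(t_{α+1},…,s)). Then for all m, ℓ ≥ 0 and points r, t_1,…,t_m, w, u_1,…,u_ℓ, s: Π^{(m+ℓ+3)}(r;t_1,…,t_m,w,u_1,…,u_ℓ;s) = Π^{(m+2)}(r;t_1,…,t_m;w)·G^{ℓ+1}(w,u_1,…,u_ℓ,s) − (−1)^m G^{m+1}(w,t_m,…,t_1,r)·Π^{(ℓ+2)}(w;u_1,…,u_ℓ;s)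 − (−1)^m Π_F^{(m+2)}(w;t_m,…,t_1;r)·Π_F^{(ℓ+2)}(w;u_1,…,u_ℓ;s). -/

import Mathlib

/-!
Splitting off the first point of the chain gives the one-step recursions
`Π(r; t, L; s) = P(r,t) G(t,L,s) − G(t,r) Π(t; L; s) − F(t,r) Π_F(t; L; s)` and
`Π_F(r; t, L; s) = F(r,t) G(t,L,s) + S(r,t) Π_F(t; L; s)`. In `Π`, the `α = 0` summands give the
`P` term and `F(t,r) Π_F(t; L; s)`; every summand with `α ≥ 1` has a left `G`-path ending in the
central factor `G(t,r)`, and what remains after pulling it out is a summand of `Π(t; L; s)` with the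
point sequence shifted by one. The theorem follows by induction on `t₁, …, tₘ`, using that
`Π_F` splits additively at `w`, and that by antisymmetry and centrality of `S` the `S`-path from
`t₁` to `w` is `(−1)^m` times the reversed path from `w` to `t₁`.
-/

/-- Ordered path product `f(x₀,x₁) f(x₁,x₂) ⋯ f(x_{k−1},x_k)` starting at `x`
through the list of subsequent points; the empty product is `1`. -/
def pathProd {A X : Type*} [Monoid A] (f : X → X → A) : X → List X → A
  | _, [] => 1
  | x, y :: l => f x y * pathProd f y l

/-- The fundamental linear chain block
`Π^{(n+2)}(r;t₁,…,tₙ;s) = ∑_{α=0}^{n} (−1)^α G^α(t_α,…,t₁,r) P(t_α,t_{α+1}) G^{n−α}(t_{α+1},…,tₙ,s)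
 − ∑_{α=0}^{n−1} ∑_{β=0}^{n−1−α} (−1)^α G^α(t_α,…,t₁,r) F(t_{α+1},t_α)
   S^β(t_{α+1},…,t_{α+β+1}) F(t_{α+β+1},t_{α+β+2}) G^{n−1−α−β}(t_{α+β+2},…,tₙ,s)`,
with `t₀ := r`, `t_{n+1} := s`. -/
def PiBlock {A X : Type*} [Ring A] (P G S F : X → X → A)
    (r : X) (ts : List X) (s : X) : A :=
  let n := ts.length
  let pt : ℕ → X := fun i => (r :: (ts ++ [s])).getD i s
  (∑ α ∈ Finset.range (n + 1),
      (-1 : A) ^ α * pathProd G (pt α) ((List.range α).reverse.map pt)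
        * P (pt α) (pt (α + 1))
        * pathProd G (pt (α + 1)) ((List.range' (α + 2) (n - α)).map pt))
  - (∑ α ∈ Finset.range n, ∑ β ∈ Finset.range (n - α),
      (-1 : A) ^ α * pathProd G (pt α) ((List.range α).reverse.map pt)
        * F (pt (α + 1)) (pt α)
        * pathProd S (pt (α + 1)) ((List.range' (α + 2) β).map pt)
        * F (pt (α + β + 1)) (pt (α + β + 2))
        * pathProd G (pt (α + β + 2)) ((List.range' (α + β + 3) (n - 1 - α - β)).map pt))

/-- The fermionic linear chain block
`Π_F^{(n+2)}(r;t₁,…,tₙ;s) = ∑_{α=0}^{n} S^α(r,t₁,…,t_α) F(t_α,t_{α+1}) G^{n−α}(t_{α+1},…,tₙ,s)`,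
with `t₀ := r`, `t_{n+1} := s`. -/
def PiFBlock {A X : Type*} [Ring A] (S F G : X → X → A)
    (r : X) (ts : List X) (s : X) : A :=
  let n := ts.length
  let pt : ℕ → X := fun i => (r :: (ts ++ [s])).getD i s
  ∑ α ∈ Finset.range (n + 1),
    pathProd S (pt 0) ((List.range' 1 α).map pt)
      * F (pt α) (pt (α + 1))
      * pathProd G (pt (α + 1)) ((List.range' (α + 2) (n - α)).map pt)

section PathProd
variable {A X : Type*}

@[simp] theorem pathProd_nil [Monoid A] (f : X → X → A) (x : X) : pathProd f x [] = 1 := rfl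

@[simp] theorem pathProd_cons [Monoid A] (f : X → X → A) (x y : X) (l : List X) :
    pathProd f x (y :: l) = f x y * pathProd f y l := rfl

theorem pathProd_append_cons [Monoid A] (f : X → X → A) (x y : X) (l₁ l₂ : List X) :
    pathProd f x (l₁ ++ y :: l₂) = pathProd f x (l₁ ++ [y]) * pathProd f y l₂ := by
  induction l₁ generalizing x with
  | nil => simp
  | cons z l₁ ih => simp [ih, mul_assoc]

theorem pathProd_commute [Monoid A] (f : X → X → A) {a : A} (h : ∀ x y, Commute (f x y) a)
    (x : X) (l : List X) : Commute (pathProd f x l) a := by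
  induction l generalizing x with
  | nil => exact Commute.one_left a
  | cons y l ih => exact (h x y).mul_left (ih y)

theorem pathProd_reverse_range_succ [Monoid A] (f : X → X → A) (pt : ℕ → X) (α : ℕ) :
    pathProd f (pt (α + 1)) ((List.range (α + 1)).reverse.map pt)
      = pathProd f (pt (α + 1)) ((List.range α).reverse.map (fun i => pt (i + 1)))
        * f (pt 1) (pt 0) := by
  induction α with
  | zero => simp
  | succ α ih =>
    rw [List.range_succ (n := α + 1), List.reverse_concat, List.map_cons, pathProd_cons, ih,
      List.range_succ (n := α), List.reverse_concat, List.map_cons, pathProd_cons, mul_assoc]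

theorem pathProd_concat_eq_neg_one_pow_mul_reverse [Ring A] (f : X → X → A)
    (hanti : ∀ x y, f x y = -f y x) (hc : ∀ x y a, Commute (f x y) a) (x y : X) (l : List X) :
    pathProd f x (l ++ [y]) = (-1) ^ (l.length + 1) * pathProd f y (l.reverse ++ [x]) := by
  induction l generalizing x with
  | nil => simp [hanti x y]
  | cons z l ih =>
    rw [List.cons_append, pathProd_cons, ih, List.reverse_cons, List.append_assoc,
      List.singleton_append, pathProd_append_cons f y z l.reverse [x], pathProd_cons, pathProd_nil,
      List.length_cons, hanti z x, (hc x z _).left_comm, (hc x z _).eq]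
    noncomm_ring

end PathProd

theorem List.map_range'_succ {X : Type*} (pt : ℕ → X) (a n : ℕ) :
    (List.range' (a + 1) n).map pt = (List.range' a n).map (fun i => pt (i + 1)) := by
  rw [List.range'_succ_left, List.map_map]
  rfl

section ChainTerms
variable {A X : Type*} [Ring A]

def chainPoint (r : X) (ts : List X) (s : X) : ℕ → X := fun i => (r :: (ts ++ [s])).getD i s

def piPTerm (P G : X → X → A) (pt : ℕ → X) (n α : ℕ) : A :=
  (-1 : A) ^ α * pathProd G (pt α) ((List.range α).reverse.map pt) * P (pt α) (pt (α + 1))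
    * pathProd G (pt (α + 1)) ((List.range' (α + 2) (n - α)).map pt)

def piFFTerm (G S F : X → X → A) (pt : ℕ → X) (n α β : ℕ) : A :=
  (-1 : A) ^ α * pathProd G (pt α) ((List.range α).reverse.map pt) * F (pt (α + 1)) (pt α)
    * pathProd S (pt (α + 1)) ((List.range' (α + 2) β).map pt)
    * F (pt (α + β + 1)) (pt (α + β + 2))
    * pathProd G (pt (α + β + 2)) ((List.range' (α + β + 3) (n - 1 - α - β)).map pt)

def piFTerm (S F G : X → X → A) (pt : ℕ → X) (n α : ℕ) : A :=
  pathProd S (pt 0) ((List.range' 1 α).map pt) * F (pt α) (pt (α + 1))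
    * pathProd G (pt (α + 1)) ((List.range' (α + 2) (n - α)).map pt)

variable (P G S F : X → X → A) (pt : ℕ → X) (n α β : ℕ)

theorem piPTerm_zero :
    piPTerm P G pt n 0 = P (pt 0) (pt 1) * pathProd G (pt 1) ((List.range' 2 n).map pt) := by
  simp [piPTerm]

theorem piPTerm_succ (hG : ∀ x y a, Commute (G x y) a) :
    piPTerm P G pt (n + 1) (α + 1)
      = -(G (pt 1) (pt 0) * piPTerm P G (fun i => pt (i + 1)) n α) := by
  rw [piPTerm, piPTerm, pathProd_reverse_range_succ, Nat.add_sub_add_right, List.map_range'_succ,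
    ← (hG _ _ _).eq, ← mul_assoc, ← (hG _ _ _).eq]
  noncomm_ring

theorem piFFTerm_zero :
    piFFTerm G S F pt (n + 1) 0 β = F (pt 1) (pt 0) * piFTerm S F G (fun i => pt (i + 1)) n β := by
  simp only [piFFTerm, piFTerm, List.map_range'_succ]
  simp [mul_assoc]

theorem piFFTerm_succ (hG : ∀ x y a, Commute (G x y) a) :
    piFFTerm G S F pt (n + 1) (α + 1) β
      = -(G (pt 1) (pt 0) * piFFTerm G S F (fun i => pt (i + 1)) n α β) := by
  rw [piFFTerm, piFFTerm, pathProd_reverse_range_succ, Nat.add_right_comm α 1 β,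
    List.map_range'_succ pt (α + 2), List.map_range'_succ pt (α + β + 3),
    show n + 1 - 1 - (α + 1) - β = n - 1 - α - β by omega,
    ← (hG _ _ _).eq, ← mul_assoc, ← (hG _ _ _).eq]
  noncomm_ring

theorem piFTerm_zero :
    piFTerm S F G pt n 0 = F (pt 0) (pt 1) * pathProd G (pt 1) ((List.range' 2 n).map pt) := by
  simp [piFTerm]

theorem piFTerm_succ :
    piFTerm S F G pt (n + 1) (α + 1)
      = S (pt 0) (pt 1) * piFTerm S F G (fun i => pt (i + 1)) n α := by
  rw [piFTerm, piFTerm, List.range'_succ, List.map_cons, pathProd_cons, List.map_range'_succ pt 1,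
    List.map_range'_succ pt (α + 2), Nat.add_sub_add_right, Nat.zero_add]
  simp only [mul_assoc]

end ChainTerms

section Recursion
variable {A X : Type*} [Ring A] (P G S F : X → X → A)

theorem chainPoint_zero (r s : X) (ts : List X) : chainPoint r ts s 0 = r := rfl

theorem chainPoint_cons_one (r t s : X) (ts : List X) : chainPoint r (t :: ts) s 1 = t := rfl

theorem chainPoint_cons_succ (r t s : X) (ts : List X) :
    (fun i => chainPoint r (t :: ts) s (i + 1)) = chainPoint t ts s := rfl

theorem map_range'_chainPoint (r s : X) (ts : List X) :
    (List.range' 1 (ts.length + 1)).map (chainPoint r ts s) = ts ++ [s] := by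
  induction ts generalizing r with
  | nil => rfl
  | cons t ts ih =>
    rw [List.length_cons, List.range'_succ, List.map_cons, List.map_range'_succ,
      chainPoint_cons_succ, ih]
    rfl

theorem map_range'_two_chainPoint_cons (r t s : X) (ts : List X) :
    (List.range' 2 (ts.length + 1)).map (chainPoint r (t :: ts) s) = ts ++ [s] := by
  rw [List.map_range'_succ, chainPoint_cons_succ, map_range'_chainPoint]

theorem PiBlock_eq_sum (r s : X) (ts : List X) :
    PiBlock P G S F r ts s
      = ∑ α ∈ Finset.range (ts.length + 1), piPTerm P G (chainPoint r ts s) ts.length α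
        - ∑ α ∈ Finset.range ts.length, ∑ β ∈ Finset.range (ts.length - α),
            piFFTerm G S F (chainPoint r ts s) ts.length α β := rfl

theorem PiFBlock_eq_sum (r s : X) (ts : List X) :
    PiFBlock S F G r ts s
      = ∑ α ∈ Finset.range (ts.length + 1), piFTerm S F G (chainPoint r ts s) ts.length α := rfl

@[simp] theorem PiBlock_nil (r s : X) : PiBlock P G S F r [] s = P r s := by
  simp [PiBlock]

@[simp] theorem PiFBlock_nil (r s : X) : PiFBlock S F G r [] s = F r s := by
  simp [PiFBlock]

theorem PiFBlock_cons (r t s : X) (ts : List X) :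
    PiFBlock S F G r (t :: ts) s
      = F r t * pathProd G t (ts ++ [s]) + S r t * PiFBlock S F G t ts s := by
  rw [PiFBlock_eq_sum, PiFBlock_eq_sum, List.length_cons, Finset.sum_range_succ', piFTerm_zero,
    map_range'_two_chainPoint_cons, Finset.mul_sum, add_comm]
  simp only [piFTerm_succ, chainPoint_cons_succ]
  rfl

theorem PiBlock_cons (hG : ∀ x y a, Commute (G x y) a) (r t s : X) (ts : List X) :
    PiBlock P G S F r (t :: ts) s
      = P r t * pathProd G t (ts ++ [s]) - G t r * PiBlock P G S F t ts s
        - F t r * PiFBlock S F G t ts s := by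
  rw [PiBlock_eq_sum, PiBlock_eq_sum, PiFBlock_eq_sum, List.length_cons, Finset.sum_range_succ',
    Finset.sum_range_succ' (fun α => ∑ β ∈ _, _), piPTerm_zero, map_range'_two_chainPoint_cons]
  simp only [Nat.add_sub_add_right, Nat.sub_zero, piPTerm_succ P G _ _ _ hG,
    piFFTerm_succ G S F _ _ _ _ hG, piFFTerm_zero, chainPoint_cons_succ, chainPoint_zero,
    chainPoint_cons_one, Finset.sum_neg_distrib, ← Finset.mul_sum]
  noncomm_ring

theorem PiFBlock_append_cons (r w s : X) (ts us : List X) :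
    PiFBlock S F G r (ts ++ w :: us) s
      = PiFBlock S F G r ts w * pathProd G w (us ++ [s])
        + pathProd S r (ts ++ [w]) * PiFBlock S F G w us s := by
  induction ts generalizing r with
  | nil => simp [PiFBlock_cons]
  | cons t ts ih =>
    rw [List.cons_append, PiFBlock_cons, ih, PiFBlock_cons, List.append_assoc, List.cons_append,
      pathProd_append_cons, List.cons_append, pathProd_cons]
    noncomm_ring

end Recursion

theorem PiBlock_recursion_general {A X : Type*} [Ring A] (P G S F : X → X → A)
    (hSanti : ∀ x y, S x y = -S y x)
    (hGcentral : ∀ x y a, G x y * a = a * G x y)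
    (hScentral : ∀ x y a, S x y * a = a * S x y)
    (r w s : X) (ts us : List X) :
    PiBlock P G S F r (ts ++ w :: us) s
      = PiBlock P G S F r ts w * pathProd G w (us ++ [s])
        - (-1 : A) ^ ts.length *
            (pathProd G w (ts.reverse ++ [r]) * PiBlock P G S F w us s)
        - (-1 : A) ^ ts.length *
            (PiFBlock S F G w ts.reverse r * PiFBlock S F G w us s) := by
  induction ts generalizing r with
  | nil => simp [PiBlock_cons P G S F hGcentral]
  | cons t ts ih =>
    have hGpath : pathProd G w ((t :: ts).reverse ++ [r])
        = pathProd G w (ts.reverse ++ [t]) * G t r := by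
      rw [List.reverse_cons, List.append_assoc, List.singleton_append, pathProd_append_cons]
      simp
    have hFblock : PiFBlock S F G w (t :: ts).reverse r
        = PiFBlock S F G w ts.reverse t * G t r + pathProd S w (ts.reverse ++ [t]) * F t r := by
      rw [List.reverse_cons, PiFBlock_append_cons (us := [])]
      simp
    have hSpath := pathProd_concat_eq_neg_one_pow_mul_reverse S hSanti hScentral t w ts
    rw [List.cons_append, PiBlock_cons P G S F hGcentral, ih, PiFBlock_append_cons,
      List.append_assoc, List.cons_append, pathProd_append_cons, hSpath,
      PiBlock_cons P G S F hGcentral r t w ts, hGpath, hFblock, List.length_cons,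
      ← hGcentral t r (pathProd G w (ts.reverse ++ [t])),
      ← hGcentral t r (PiFBlock S F G w ts.reverse t),
      (pathProd_commute S (hScentral · · (F t r)) w (ts.reverse ++ [t])).eq]
    -- `(-1) ^ m = ±1` is central
    rcases neg_one_pow_eq_or A ts.length with h | h <;> simp only [pow_succ, h] <;> noncomm_ring

/-- generalized recursion relation for the fundamental chain block:
`Π^{(m+ℓ+3)}(r;t₁,…,tₘ,w,u₁,…,u_ℓ;s)
 = Π^{(m+2)}(r;t₁,…,tₘ;w) G^{ℓ+1}(w,u₁,…,u_ℓ,s)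
 − (−1)^m G^{m+1}(w,tₘ,…,t₁,r) Π^{(ℓ+2)}(w;u₁,…,u_ℓ;s)
 − (−1)^m Π_F^{(m+2)}(w;tₘ,…,t₁;r) Π_F^{(ℓ+2)}(w;u₁,…,u_ℓ;s)`. -/
theorem PiBlock_recursion {A X : Type*} [Ring A] (P G S F : X → X → A)
    (hPsymm : ∀ x y, P x y = P y x)
    (hSanti : ∀ x y, S x y = -S y x)
    (hPcentral : ∀ x y a, P x y * a = a * P x y)
    (hGcentral : ∀ x y a, G x y * a = a * G x y)
    (hScentral : ∀ x y a, S x y * a = a * S x y)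
    (hFodd : ∀ x y z w, F x y * F z w = -(F z w * F x y))
    (r w s : X) (ts us : List X) :
    PiBlock P G S F r (ts ++ w :: us) s
      = PiBlock P G S F r ts w * pathProd G w (us ++ [s])
        - (-1 : A) ^ ts.length *
            (pathProd G w (ts.reverse ++ [r]) * PiBlock P G S F w us s)
        - (-1 : A) ^ ts.length *
            (PiFBlock S F G w ts.reverse r * PiFBlock S F G w us s) :=
  PiBlock_recursion_general P G S F hSanti hGcentral hScentral r w s ts us
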